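/- arXiv:1109.1994 — 2 statements merged into one kernel-verified Lean document; each statement's English description precedes it below -/
import Mathlib

section
/- Let G be a finite simple graph and let S₁, S₂ be two disjoint sets of vertices of G, each of size at least 2, with no edge of G joining a vertex of S₁ to a vertex of S₂. Assume that G has at least one triangle contained in S₁ ∪ S₂ (i.e., i(S₁ ∪ S₂) > 0). If C(S₁) ≤ C(S₁ ∪ S₂), then C(S₂) > C(S₁ ∪ S₂). -/
/-!
A triangle cannot have vertices on both sides of the separation, so `i` and `o` are additive
over `S₁ ∪ S₂`, while `choose (·) 3` is strictly superadditive on sizes `≥ 2`. Put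
`M = C(S₁ ∪ S₂) > 0`, `cₖ = choose(|Sₖ|, 3)`, `pₖ = i(Sₖ) + o(Sₖ)`. If both `C(Sₖ) ≤ M`, then
`i(Sₖ)² ≤ M cₖ pₖ`, and Cauchy–Schwarz gives
`(i(S₁) + i(S₂))² ≤ M (c₁ + c₂)(p₁ + p₂) < M · choose(|S₁ ∪ S₂|, 3) · (p₁ + p₂) = (i(S₁) + i(S₂))²`.
-/

open Finset
open scoped Classical

/-- The set of triangles of a finite simple graph `G`: 3-element vertex sets
that are pairwise adjacent. -/
noncomputable def triangles {V : Type*} [Fintype V] (G : SimpleGraph V) : Finset (Finset V) :=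
  Finset.univ.filter (fun t => t.card = 3 ∧ (t : Set V).Pairwise G.Adj)

/-- `triIn G S` is the number of triangles of `G` with all three vertices in `S`. -/
noncomputable def triIn {V : Type*} [Fintype V] (G : SimpleGraph V) (S : Finset V) : ℕ :=
  ((triangles G).filter (fun t => t ⊆ S)).card

/-- `triOut G S` is the number of triangles of `G` with exactly two vertices in `S`. -/
noncomputable def triOut {V : Type*} [Fintype V] (G : SimpleGraph V) (S : Finset V) : ℕ :=
  ((triangles G).filter (fun t => (t ∩ S).card = 2)).card

/-- The cohesion of a set of vertices `S` in `G`: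
`C(S) = i(S)² / (choose(|S|,3) · (i(S) + o(S)))`, which is `0` when the
denominator vanishes (division by zero in `ℝ`). -/
noncomputable def cohesion {V : Type*} [Fintype V] (G : SimpleGraph V) (S : Finset V) : ℝ :=
  (triIn G S : ℝ) ^ 2 / ((S.card.choose 3 : ℝ) * ((triIn G S : ℝ) + (triOut G S : ℝ)))

lemma choose_three_add_choose_three_lt {m n : ℕ} (hm : 2 ≤ m) (hn : 2 ≤ n) :
    m.choose 3 + n.choose 3 < (m + n).choose 3 := by
  have hsplit : (m + n).choose 3 = m.choose 3 + m.choose 2 * n + m * n.choose 2 + n.choose 3 := by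
    rw [Nat.add_choose_eq]
    simp only [Nat.sum_antidiagonal_succ, Nat.antidiagonal_zero, sum_singleton, zero_add,
      Nat.choose_zero_right, Nat.choose_one_right]
    ring
  have hmixed : 0 < m * n.choose 2 := Nat.mul_pos (by omega) (Nat.choose_pos hn)
  omega

lemma sq_add_le_add_mul_add {a₁ a₂ x₁ x₂ y₁ y₂ : ℝ}
    (hx₁ : 0 ≤ x₁) (hx₂ : 0 ≤ x₂) (hy₁ : 0 ≤ y₁) (hy₂ : 0 ≤ y₂)
    (h₁ : a₁ ^ 2 ≤ x₁ * y₁) (h₂ : a₂ ^ 2 ≤ x₂ * y₂) :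
    (a₁ + a₂) ^ 2 ≤ (x₁ + x₂) * (y₁ + y₂) := by
  have hprod : (2 * (a₁ * a₂)) ^ 2 ≤ (x₁ * y₂ + x₂ * y₁) ^ 2 := by
    calc (2 * (a₁ * a₂)) ^ 2 = 4 * (a₁ ^ 2 * a₂ ^ 2) := by ring
      _ ≤ 4 * ((x₁ * y₁) * (x₂ * y₂)) := by gcongr
      _ ≤ (x₁ * y₂ + x₂ * y₁) ^ 2 := by nlinarith [sq_nonneg (x₁ * y₂ - x₂ * y₁)]
  have hcross : 2 * (a₁ * a₂) ≤ x₁ * y₂ + x₂ * y₁ := le_of_sq_le_sq hprod (by positivity)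
  nlinarith

section

variable {V : Type*} {G : SimpleGraph V} {S₁ S₂ : Finset V}

lemma disjoint_or_disjoint_of_isClique (hdisj : Disjoint S₁ S₂)
    (hsep : ∀ u ∈ S₁, ∀ v ∈ S₂, ¬ G.Adj u v) {t : Finset V} (ht : G.IsClique (t : Set V)) :
    Disjoint t S₁ ∨ Disjoint t S₂ := by
  by_contra! h
  obtain ⟨u, hut, hu⟩ := not_disjoint_iff.1 h.1
  obtain ⟨v, hvt, hv⟩ := not_disjoint_iff.1 h.2
  exact hsep u hu v hv (ht hut hvt (disjoint_left.1 hdisj hu <| · ▸ hv))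

variable [Fintype V]

lemma mem_triangles {t : Finset V} :
    t ∈ triangles G ↔ t.card = 3 ∧ G.IsClique (t : Set V) := by
  simp [triangles, SimpleGraph.IsClique]

lemma triIn_le_choose_three (S : Finset V) : triIn G S ≤ S.card.choose 3 := by
  rw [triIn, ← card_powersetCard]
  refine card_le_card fun t ht => ?_
  rw [mem_filter, mem_triangles] at ht
  exact mem_powersetCard.2 ⟨ht.2, ht.1.1⟩

lemma triIn_eq_card_filter_card_inter (S : Finset V) :
    triIn G S = ((triangles G).filter (fun t => (t ∩ S).card = 3)).card := by
  refine congrArg card (filter_congr fun t ht => ?_)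
  rw [← inter_eq_left, ← (mem_triangles.1 ht).1]
  exact ⟨fun h => by rw [h], fun h => eq_of_subset_of_card_le inter_subset_left h.ge⟩

lemma card_filter_card_inter_union (hdisj : Disjoint S₁ S₂)
    (hsep : ∀ u ∈ S₁, ∀ v ∈ S₂, ¬ G.Adj u v) {k : ℕ} (hk : k ≠ 0) :
    ((triangles G).filter (fun t => (t ∩ (S₁ ∪ S₂)).card = k)).card =
      ((triangles G).filter (fun t => (t ∩ S₁).card = k)).card +
        ((triangles G).filter (fun t => (t ∩ S₂).card = k)).card := by
  have hsplit : ∀ t ∈ triangles G, (t ∩ S₁).card = 0 ∨ (t ∩ S₂).card = 0 := fun t ht => by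
    simpa [card_eq_zero, ← disjoint_iff_inter_eq_empty] using
      disjoint_or_disjoint_of_isClique hdisj hsep (mem_triangles.1 ht).2
  have hcard : ∀ t : Finset V, (t ∩ (S₁ ∪ S₂)).card = (t ∩ S₁).card + (t ∩ S₂).card := fun t => by
    rw [inter_union_distrib_left,
      card_union_of_disjoint (hdisj.mono inter_subset_right inter_subset_right)]
  rw [← card_union_of_disjoint, ← filter_or]
  · exact congrArg card (filter_congr fun t ht => by have := hsplit t ht; have := hcard t; omega)
  · exact disjoint_filter.2 fun t ht h₁ h₂ => by have := hsplit t ht; omega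

lemma triIn_union (hdisj : Disjoint S₁ S₂) (hsep : ∀ u ∈ S₁, ∀ v ∈ S₂, ¬ G.Adj u v) :
    triIn G (S₁ ∪ S₂) = triIn G S₁ + triIn G S₂ := by
  simp only [triIn_eq_card_filter_card_inter]
  exact card_filter_card_inter_union hdisj hsep three_ne_zero

lemma triOut_union (hdisj : Disjoint S₁ S₂) (hsep : ∀ u ∈ S₁, ∀ v ∈ S₂, ¬ G.Adj u v) :
    triOut G (S₁ ∪ S₂) = triOut G S₁ + triOut G S₂ :=
  card_filter_card_inter_union hdisj hsep two_ne_zero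

lemma cohesion_nonneg (S : Finset V) : 0 ≤ cohesion G S := by
  unfold cohesion
  positivity

lemma cohesion_mul_eq_sq_triIn {S : Finset V} (h : 0 < triIn G S) :
    cohesion G S * ((S.card.choose 3 : ℝ) * (triIn G S + triOut G S)) = (triIn G S : ℝ) ^ 2 := by
  have hc : 0 < S.card.choose 3 := h.trans_le (triIn_le_choose_three S)
  exact div_mul_cancel₀ _ (by positivity)

lemma sq_triIn_le_of_cohesion_le {S : Finset V} {M : ℝ} (h : cohesion G S ≤ M) :
    (triIn G S : ℝ) ^ 2 ≤ M * S.card.choose 3 * (triIn G S + triOut G S) := by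
  rcases (show (0 : ℝ) ≤ (S.card.choose 3 : ℝ) * (triIn G S + triOut G S) by positivity).eq_or_lt
    with hd | hd
  · have hin : triIn G S = 0 := by
      rcases mul_eq_zero.1 hd.symm with hc | hp
      · exact Nat.le_zero.1 (Nat.cast_eq_zero.1 hc ▸ triIn_le_choose_three S)
      · exact_mod_cast (add_eq_zero_iff_of_nonneg (by positivity) (by positivity)).1 hp |>.1
    rw [mul_assoc, ← hd, hin]
    simp
  · rw [mul_assoc]
    exact (div_le_iff₀ hd).1 h

end

theorem cohesion_lemma_of_disconnected {V : Type*} [Fintype V]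
    (G : SimpleGraph V) (S₁ S₂ : Finset V)
    (hdisj : Disjoint S₁ S₂)
    (h₁ : 2 ≤ S₁.card) (h₂ : 2 ≤ S₂.card)
    (hsep : ∀ u ∈ S₁, ∀ v ∈ S₂, ¬ G.Adj u v)
    (htri : 0 < triIn G (S₁ ∪ S₂))
    (hle : cohesion G S₁ ≤ cohesion G (S₁ ∪ S₂)) :
    cohesion G (S₁ ∪ S₂) < cohesion G S₂ := by
  by_contra! hge
  have hunion := cohesion_mul_eq_sq_triIn htri
  rw [triIn_union hdisj hsep, triOut_union hdisj hsep, card_union_of_disjoint hdisj] at hunion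
  rw [triIn_union hdisj hsep] at htri
  push_cast at hunion
  have hM₀ := cohesion_nonneg (G := G) (S₁ ∪ S₂)
  have hsq := sq_add_le_add_mul_add (by positivity) (by positivity) (by positivity)
    (by positivity) (sq_triIn_le_of_cohesion_le hle) (sq_triIn_le_of_cohesion_le hge)
  have hchoose : (S₁.card.choose 3 + S₂.card.choose 3 : ℝ) < (S₁.card + S₂.card).choose 3 := by
    exact_mod_cast choose_three_add_choose_three_lt h₁ h₂
  have hin : (0 : ℝ) < triIn G S₁ + triIn G S₂ := by exact_mod_cast htri
  have hP : (0 : ℝ) < triIn G S₁ + triIn G S₂ + (triOut G S₁ + triOut G S₂) := by positivity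
  have hM : 0 < cohesion G (S₁ ∪ S₂) := hM₀.lt_of_ne fun h => by
    rw [← h, zero_mul] at hunion
    nlinarith
  nlinarith [mul_lt_mul_of_pos_right (mul_lt_mul_of_pos_left hchoose hM) hP]
end

section
/- Let G = (V,E) be a finite simple graph with n = |V| ≥ 4, let G′ be the graph obtained from G by the clique-attachment construction, and let K ⊆ V be a clique of G of size k with 3 ≤ k ≤ n. Then, computing in G′: i_{G′}(K) = choose(k,3), o_{G′}(K) = choose(k,2)·(n−k), and hence the cohesion of K in G′ equals λ(k) = choose(k,3) / (choose(k,3) + choose(k,2)·(n−k)). -/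
open Finset
open scoped Classical

/-- The clique-attachment construction: for each non-adjacent pair `{u,v}` of
vertices of `G`, add the edge `uv`, attach a fresh clique `K_{u,v}` of `T` new
vertices, and join both `u` and `v` to every vertex of that clique.  The added
cliques for distinct non-adjacent pairs are disjoint.  (Note that after adding
all the missing edges, the original vertex set becomes a clique.) -/
noncomputable def cliqueAttach {V : Type*} [Fintype V] (G : SimpleGraph V) (T : ℕ) :
    SimpleGraph (V ⊕ ({p : Sym2 V // ¬ p.IsDiag ∧ p ∉ G.edgeSet} × Fin T)) where
  Adj x y :=
    match x, y with
    | Sum.inl a, Sum.inl b => a ≠ b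
    | Sum.inl a, Sum.inr (p, _) => a ∈ (p : Sym2 V)
    | Sum.inr (p, _), Sum.inl a => a ∈ (p : Sym2 V)
    | Sum.inr (p, i), Sum.inr (q, j) => p = q ∧ i ≠ j
  symm := ⟨by
    rintro (a | ⟨p, i⟩) (b | ⟨q, j⟩) h <;> simp_all <;> tauto⟩
  loopless := ⟨by
    rintro (a | ⟨p, i⟩) h <;> simp_all⟩

/-!
In `cliqueAttach G T` the original vertices are pairwise adjacent, so every 3-subset of `K` is a
triangle and `i(K) = C(k,3)`. A triangle with exactly two vertices in a clique `S` is a pair of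
`S` together with an outside common neighbour, so `o(S) = ∑_{x ∉ S} C(|N(x) ∩ S|, 2)`. An original
vertex outside `K` sees all of `K` and contributes `C(k,2)`; a vertex of an attached clique
`K_{uv}` sees only `u` and `v`, which are non-adjacent in `G` and hence not both in `K`, so it
contributes nothing. Since `i(K) = C(k,3) ≠ 0`, the cohesion reduces to `i / (i + o)`.
-/

section SumCompl

variable {α β : Type*} [Fintype (α ⊕ β)] [DecidableEq (α ⊕ β)] (s : Finset α)

theorem Finset.toLeft_compl_image_inl [Fintype α] [DecidableEq α] :
    (s.image (Sum.inl : α → α ⊕ β))ᶜ.toLeft = sᶜ := by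
  ext; simp

theorem Finset.toRight_compl_image_inl [Fintype β] :
    (s.image (Sum.inl : α → α ⊕ β))ᶜ.toRight = univ := by
  ext; simp

end SumCompl

theorem Finset.sum_card_inter_eq_sum_card_filter_mem {α : Type*} [DecidableEq α] (s : Finset α)
    (B : Finset (Finset α)) : ∑ t ∈ B, #(s ∩ t) = ∑ a ∈ s, #{t ∈ B | a ∈ t} := by
  simp_rw [← filter_mem_eq_inter, card_eq_sum_ones, sum_filter]
  exact sum_comm

section Triangles

variable {W : Type*} [Fintype W] (H : SimpleGraph W) {S : Finset W}

theorem mem_triangles_s9 {t : Finset W} :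
    t ∈ triangles H ↔ #t = 3 ∧ (t : Set W).Pairwise H.Adj := by
  simp [triangles]

theorem triIn_eq_choose_of_isClique (hS : H.IsClique (S : Set W)) :
    triIn H S = (#S).choose 3 := by
  rw [triIn, ← card_powersetCard]
  congr 1
  ext t
  simp only [mem_filter, mem_triangles_s9, mem_powersetCard]
  exact ⟨fun ⟨⟨h3, _⟩, hsub⟩ => ⟨hsub, h3⟩,
    fun ⟨hsub, h3⟩ => ⟨⟨h3, hS.subset (coe_subset.mpr hsub)⟩, hsub⟩⟩

theorem card_triOut_triangles_through_of_isClique [DecidableEq W] (hS : H.IsClique (S : Set W))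
    {x : W} (hx : x ∉ S) :
    #{t ∈ {t ∈ triangles H | #(t ∩ S) = 2} | x ∈ t} = #({y ∈ S | H.Adj x y}.powersetCard 2) := by
  apply card_nbij' (·.erase x) (insert x)
  · intro t ht
    simp only [mem_coe, mem_filter, mem_triangles_s9] at ht
    obtain ⟨⟨⟨h3, hadj⟩, h2⟩, hxt⟩ := ht
    have hsub : t ∩ S ⊆ t.erase x := fun y hy =>
      mem_erase.mpr ⟨fun h => hx (h ▸ (mem_inter.mp hy).2), (mem_inter.mp hy).1⟩
    have heq : t ∩ S = t.erase x :=
      eq_of_subset_of_card_le hsub (by rw [card_erase_of_mem hxt, h3, h2])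
    simp only [mem_coe, mem_powersetCard, ← heq, h2, and_true]
    intro y hy
    exact mem_filter.mpr ⟨(mem_inter.mp hy).2,
      hadj hxt (mem_inter.mp hy).1 fun h => hx (h ▸ (mem_inter.mp hy).2)⟩
  · intro p hp
    simp only [mem_coe, mem_powersetCard] at hp
    obtain ⟨hpS, hp2⟩ := hp
    have hxp : x ∉ p := fun h => hx (mem_filter.mp (hpS h)).1
    have hinter : insert x p ∩ S = p := by
      rw [insert_inter_of_notMem hx, inter_eq_left]
      exact hpS.trans (filter_subset _ _)
    simp only [mem_coe, mem_filter, mem_triangles_s9,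
      hinter, hp2, mem_insert_self, and_true, card_insert_of_notMem hxp, coe_insert, true_and]
    refine Set.Pairwise.insert ?_ fun y hy _ => ?_
    · exact hS.subset fun y hy => (mem_filter.mp (hpS hy)).1
    · have := (mem_filter.mp (hpS hy)).2
      exact ⟨this, this.symm⟩
  · intro t ht
    exact insert_erase (mem_filter.mp ht).2
  · intro p hp
    exact erase_insert fun h => hx (mem_filter.mp ((mem_powersetCard.mp hp).1 h)).1

theorem triOut_eq_sum_choose_of_isClique [DecidableEq W] (hS : H.IsClique (S : Set W)) :
    triOut H S = ∑ x ∈ Sᶜ, (#{y ∈ S | H.Adj x y}).choose 2 := by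
  calc triOut H S = ∑ t ∈ {t ∈ triangles H | #(t ∩ S) = 2}, #(Sᶜ ∩ t) := by
        -- `triOut` computes `t ∩ S` with classical decidability, here with `[DecidableEq W]`
        rw [show triOut H S = #{t ∈ triangles H | #(t ∩ S) = 2} by unfold triOut; convert rfl,
          card_eq_sum_ones]
        refine sum_congr rfl fun t ht => ?_
        have h2 : #(t ∩ S) = 2 := (mem_filter.mp ht).2
        have h3 : #t = 3 := ((mem_triangles_s9 H).mp (mem_filter.mp ht).1).1
        have := card_inter_add_card_sdiff t S
        rw [inter_comm, ← sdiff_eq_inter_compl]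
        omega
    _ = ∑ x ∈ Sᶜ, #{t ∈ {t ∈ triangles H | #(t ∩ S) = 2} | x ∈ t} :=
        sum_card_inter_eq_sum_card_filter_mem _ _
    _ = _ := sum_congr rfl fun x hx => by
        rw [card_triOut_triangles_through_of_isClique H hS (mem_compl.mp hx), card_powersetCard]

theorem cohesion_eq_of_triIn_eq_choose (hS : 3 ≤ #S) (hIn : triIn H S = (#S).choose 3) :
    cohesion H S = triIn H S / (triIn H S + triOut H S) := by
  have hpos : (0 : ℝ) < (#S).choose 3 := by exact_mod_cast Nat.choose_pos hS
  rw [← hIn] at hpos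
  rw [cohesion, ← hIn, sq, mul_div_mul_left _ _ hpos.ne']

end Triangles

section CliqueAttach

variable {V : Type*} [Fintype V] {G : SimpleGraph V} {T : ℕ}

theorem cliqueAttach_isClique_range_inl : (cliqueAttach G T).IsClique (Set.range Sum.inl) := by
  rintro _ ⟨a, rfl⟩ _ ⟨b, rfl⟩ hab
  exact fun h => hab (congrArg Sum.inl h)

theorem cliqueAttach_filter_adj_inl_image_inl {K : Finset V} {c : V} (hc : c ∉ K) :
    filter ((cliqueAttach G T).Adj (.inl c)) (K.image Sum.inl) = K.image Sum.inl := by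
  refine filter_true_of_mem fun y hy => ?_
  obtain ⟨a, ha, rfl⟩ := mem_image.mp hy
  exact fun h => hc (h ▸ ha)

theorem cliqueAttach_card_filter_adj_inr_image_inl_le_one {K : Finset V}
    (hK : G.IsClique (K : Set V)) (x : {p : Sym2 V // ¬ p.IsDiag ∧ p ∉ G.edgeSet} × Fin T) :
    #(filter ((cliqueAttach G T).Adj (.inr x)) (K.image Sum.inl)) ≤ 1 := by
  -- `x` lies in the clique attached to a non-edge `q` of `G` and sees only the ends of `q`;
  -- two of them in the clique `K` would make `q` an edge
  obtain ⟨⟨q, hq⟩, i⟩ := x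
  refine card_le_one.mpr fun y hy z hz => ?_
  obtain ⟨⟨a, ha, rfl⟩, haq⟩ := And.imp_left mem_image.mp (mem_filter.mp hy)
  obtain ⟨⟨b, hb, rfl⟩, hbq⟩ := And.imp_left mem_image.mp (mem_filter.mp hz)
  by_contra hab
  have hab : a ≠ b := fun h => hab (congrArg Sum.inl h)
  apply hq.2
  change a ∈ q at haq
  change b ∈ q at hbq
  rw [(Sym2.mem_and_mem_iff hab).mp ⟨haq, hbq⟩]
  exact hK ha hb hab

theorem triIn_cliqueAttach_image_inl (K : Finset V) :
    triIn (cliqueAttach G T) (K.image Sum.inl) = (#K).choose 3 := by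
  rw [triIn_eq_choose_of_isClique _ (cliqueAttach_isClique_range_inl.subset (by simp)),
    card_image_of_injective _ Sum.inl_injective]

theorem triOut_cliqueAttach_image_inl {K : Finset V} (hK : G.IsClique (K : Set V)) :
    triOut (cliqueAttach G T) (K.image Sum.inl) = (#K).choose 2 * (Fintype.card V - #K) := by
  rw [triOut_eq_sum_choose_of_isClique _ (cliqueAttach_isClique_range_inl.subset (by simp)),
    sum_sum_eq_sum_toLeft_add_sum_toRight, toLeft_compl_image_inl, toRight_compl_image_inl]
  have houter (c : V) (hc : c ∈ Kᶜ) :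
      (#{y ∈ K.image Sum.inl | (cliqueAttach G T).Adj (.inl c) y}).choose 2 = (#K).choose 2 := by
    rw [cliqueAttach_filter_adj_inl_image_inl (mem_compl.mp hc),
      card_image_of_injective _ Sum.inl_injective]
  have hattached (x) (_ : x ∈ univ) :
      (#{y ∈ K.image Sum.inl | (cliqueAttach G T).Adj (.inr x) y}).choose 2 = 0 :=
    Nat.choose_eq_zero_of_lt
      ((cliqueAttach_card_filter_adj_inr_image_inl_le_one hK x).trans_lt one_lt_two)
  rw [sum_congr rfl houter, sum_eq_zero hattached, sum_const, card_compl, smul_eq_mul,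
    add_zero, mul_comm]

end CliqueAttach

theorem clique_cohesion_in_cliqueAttach_general {V : Type*} [Fintype V] (G : SimpleGraph V)
    (T : ℕ)
    (K : Finset V) (k : ℕ) (hclique : G.IsClique (K : Set V)) (hcard : K.card = k)
    (h3 : 3 ≤ k) :
    triIn (cliqueAttach G T) (K.image Sum.inl) = Nat.choose k 3 ∧
    triOut (cliqueAttach G T) (K.image Sum.inl) =
      Nat.choose k 2 * (Fintype.card V - k) ∧
    cohesion (cliqueAttach G T) (K.image Sum.inl) =
      (Nat.choose k 3 : ℝ) /
        ((Nat.choose k 3 + Nat.choose k 2 * (Fintype.card V - k) : ℕ) : ℝ) := by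
  subst hcard
  have hIn := triIn_cliqueAttach_image_inl (G := G) (T := T) K
  have hOut := triOut_cliqueAttach_image_inl (T := T) hclique
  refine ⟨hIn, hOut, ?_⟩
  rw [cohesion_eq_of_triIn_eq_choose _ ?_ ?_, hIn, hOut]
  · norm_cast
  all_goals rwa [card_image_of_injective _ Sum.inl_injective]

theorem clique_cohesion_in_cliqueAttach {V : Type*} [Fintype V] (G : SimpleGraph V)
    (hn : 4 ≤ Fintype.card V)
    (T : ℕ) (hT : T = 2 * (Nat.choose (Fintype.card V) 3) ^ 4)
    (K : Finset V) (k : ℕ) (hclique : G.IsClique (K : Set V)) (hcard : K.card = k)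
    (h3 : 3 ≤ k) (hkn : k ≤ Fintype.card V) :
    triIn (cliqueAttach G T) (K.image Sum.inl) = Nat.choose k 3 ∧
    triOut (cliqueAttach G T) (K.image Sum.inl) =
      Nat.choose k 2 * (Fintype.card V - k) ∧
    cohesion (cliqueAttach G T) (K.image Sum.inl) =
      (Nat.choose k 3 : ℝ) /
        ((Nat.choose k 3 + Nat.choose k 2 * (Fintype.card V - k) : ℕ) : ℝ) :=
  clique_cohesion_in_cliqueAttach_general G T K k hclique hcard h3
end
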